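/- arXiv:2302.13127 — 5 statements merged into one kernel-verified Lean document; each statement's English description precedes it below -/
import Mathlib

section
/- For every prime p and every positive integer d, B_0(p,d) ≤ B'(p,d). -/
/-- `lambdaP p m = ∑ i·c_i·p^i` where `m = ∑ c_i p^i` is the base-`p` expansion. -/
def lambdaP (p m : ℕ) : ℕ :=
  ∑ i ∈ Finset.range (Nat.digits p m).length, i * (Nat.digits p m).getD i 0 * p ^ i

/-- The Brumer–Kramer local conductor bound divided by `d` (rounded down):
`B'(p,d) = 2 + ⌊(p·t + (p−1)·λ_p(t))/d⌋` with `t = ⌊2d/(p−1)⌋`. -/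
def Bprime (p d : ℕ) : ℕ :=
  2 + (p * (2 * d / (p - 1)) + (p - 1) * lambdaP p (2 * d / (p - 1))) / d

/-- The bound `B_0(p,d)` of the paper. -/
def B0 (p d : ℕ) : ℕ :=
  if p = 2 then 8 + 2 * padicValNat 2 d
  else if p = 3 then 5 + 2 * padicValNat 3 d
  else if (p - 1) ∣ 2 * d then 4 + 2 * padicValNat p d
  else 2

lemma digit_eq (p : ℕ) (hp : 2 ≤ p) : ∀ (i m : ℕ), (Nat.digits p m).getD i 0 = m / p ^ i % p := by
  intro i
  induction i with
  | zero =>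
    intro m
    rcases Nat.eq_zero_or_pos m with h | h
    · simp [h]
    · rw [Nat.digits_def' hp h]; simp
  | succ i ih =>
    intro m
    rcases Nat.eq_zero_or_pos m with h | h
    · simp [h]
    · rw [Nat.digits_def' hp h]
      simp only [List.getD_cons_succ]
      rw [ih (m / p), Nat.div_div_eq_div_mul, pow_succ, mul_comm (p ^ i) p]

lemma ofDigits_sum (p : ℕ) : ∀ L : List ℕ, (Nat.ofDigits p L : ℕ) =
    ∑ i ∈ Finset.range L.length, L.getD i 0 * p ^ i := by
  intro L
  induction L with
  | nil => simp
  | cons a L ih =>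
    rw [Nat.ofDigits_cons, List.length_cons, Finset.sum_range_succ']
    simp only [List.getD_cons_succ, List.getD_cons_zero, pow_zero, mul_one, pow_succ, ih,
      Finset.mul_sum]
    rw [add_comm]
    congr 1
    exact Finset.sum_congr rfl fun i _ => by ring

lemma sum_digits_eq (p m : ℕ) :
    m = ∑ i ∈ Finset.range (Nat.digits p m).length, (Nat.digits p m).getD i 0 * p ^ i := by
  conv_lhs => rw [← Nat.ofDigits_digits p m]
  exact_mod_cast ofDigits_sum p (Nat.digits p m)

lemma lambda_ge (p m v : ℕ) (hp : 2 ≤ p) (hv : p ^ v ∣ m) : v * m ≤ lambdaP p m := by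
  rw [lambdaP]
  calc v * m = ∑ i ∈ Finset.range (Nat.digits p m).length,
        v * ((Nat.digits p m).getD i 0 * p ^ i) := by
        rw [← Finset.mul_sum, ← sum_digits_eq]
    _ ≤ _ := by
        apply Finset.sum_le_sum
        intro i _
        by_cases hi : v ≤ i
        · rw [← mul_assoc]
          exact Nat.mul_le_mul_right _ (Nat.mul_le_mul_right _ hi)
        · have hz : (Nat.digits p m).getD i 0 = 0 := by
            rw [digit_eq p hp]
            have hpd : p ∣ m / p ^ i := by
              rw [Nat.dvd_div_iff_mul_dvd (dvd_trans (pow_dvd_pow p (by omega)) hv)]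
              exact dvd_trans (by rw [← pow_succ]; exact pow_dvd_pow p (by omega)) hv
            obtain ⟨k, hk⟩ := hpd
            simp [hk, Nat.mul_mod_right]
          rw [hz]
          simp

theorem stmt_0 (p d : ℕ) (hp : p.Prime) (hd : 0 < d) :
    B0 p d ≤ Bprime p d := by
  have hp2 : 2 ≤ p := hp.two_le
  by_cases h2 : p = 2
  · subst h2
    set v := padicValNat 2 d with hvdef
    have hv : (2:ℕ) ^ v ∣ d := pow_padicValNat_dvd
    have hl : (v + 1) * (2 * d) ≤ lambdaP 2 (2 * d) := by
      apply lambda_ge 2 (2 * d) (v + 1) le_rfl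
      rw [pow_succ, mul_comm 2 d, mul_comm (2 ^ v) 2, mul_comm d 2]
      exact mul_dvd_mul dvd_rfl hv
    have ht : 2 * d / (2 - 1) = 2 * d := by norm_num
    rw [B0, Bprime, if_pos rfl, ht]
    have key : 6 + 2 * v ≤ (2 * (2 * d) + (2 - 1) * lambdaP 2 (2 * d)) / d :=
      (Nat.le_div_iff_mul_le hd).2 (by nlinarith)
    omega
  by_cases h3 : p = 3
  · subst h3
    set v := padicValNat 3 d with hvdef
    have hv : (3:ℕ) ^ v ∣ d := pow_padicValNat_dvd
    have hl : v * d ≤ lambdaP 3 d := lambda_ge 3 d v (by norm_num) hv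
    have ht : 2 * d / (3 - 1) = d := by omega
    rw [B0, Bprime, if_neg (by norm_num), if_pos rfl, ht]
    have key : 3 + 2 * v ≤ (3 * d + (3 - 1) * lambdaP 3 d) / d :=
      (Nat.le_div_iff_mul_le hd).2 (by nlinarith)
    omega
  by_cases hdvd : (p - 1) ∣ 2 * d
  · rw [B0, Bprime, if_neg h2, if_neg h3, if_pos hdvd]
    set v := padicValNat p d with hvdef
    set t := 2 * d / (p - 1) with htdef
    have hv : p ^ v ∣ d := pow_padicValNat_dvd
    have h1 : (p - 1) * t = 2 * d := Nat.mul_div_cancel' hdvd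
    have hcop : (p ^ v).Coprime (p - 1) := by
      apply Nat.Coprime.pow_left
      rw [hp.coprime_iff_not_dvd]
      intro hc
      have := Nat.le_of_dvd (by omega) hc
      omega
    have hvt : p ^ v ∣ t := by
      apply hcop.dvd_of_dvd_mul_left
      rw [h1]
      exact dvd_trans hv ⟨2, by ring⟩
    have hl : v * t ≤ lambdaP p t := lambda_ge p t v hp2 hvt
    have e : p * t = 2 * d + t := by
      have hsplit : p * t = (p - 1) * t + 1 * t := by
        rw [← Nat.add_mul]
        congr 1
        omega
      rw [hsplit, h1, one_mul]
    have e2 : v * (2 * d) ≤ (p - 1) * lambdaP p t := by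
      calc v * (2 * d) = (p - 1) * (v * t) := by rw [← h1]; ring
        _ ≤ _ := Nat.mul_le_mul_left _ hl
    have key : 2 + 2 * v ≤ (p * t + (p - 1) * lambdaP p t) / d :=
      (Nat.le_div_iff_mul_le hd).2 (by nlinarith)
    omega
  · rw [B0, Bprime, if_neg h2, if_neg h3, if_neg hdvd]
    exact Nat.le_add_right 2 _
end

section
/- If p is a prime and d a positive integer with 5 ≤ p < 2d+1 and (p−1) ∤ 2d, then B_0(p,d) < B'(p,d). -/
theorem stmt_1 (p d : ℕ) (hp : p.Prime) (hd : 0 < d)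
    (h5 : 5 ≤ p) (hlt : p < 2 * d + 1) (hndvd : ¬ (p - 1) ∣ 2 * d) :
    B0 p d < Bprime p d := by
  have hB0 : B0 p d = 2 := by
    unfold B0
    rw [if_neg (by omega), if_neg (by omega), if_neg hndvd]
  have hp1 : 0 < p - 1 := by omega
  have ht1 : 1 ≤ 2 * d / (p - 1) := Nat.one_le_div_iff hp1 |>.2 (by omega)
  have hmod : 2 * d % (p - 1) ≠ 0 := fun h => hndvd (Nat.dvd_of_mod_eq_zero h)
  have hdiv := Nat.div_add_mod (2 * d) (p - 1)
  have hmodlt : 2 * d % (p - 1) < p - 1 := Nat.mod_lt _ hp1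
  have hkey : d ≤ p * (2 * d / (p - 1)) := by
    have h1 : (p - 1) * (2 * d / (p - 1)) + (p - 1) ≥ 2 * d + 1 := by omega
    nlinarith [Nat.sub_add_cancel (by omega : 1 ≤ p)]
  have hge : 1 ≤ (p * (2 * d / (p - 1)) + (p - 1) * lambdaP p (2 * d / (p - 1))) / d :=
    Nat.one_le_div_iff hd |>.2 (by omega)
  unfold Bprime
  omega
end

section
/- Let p be a prime and d a positive integer such that 2d = a·p^m·(p−1) for some integer m ≥ 0 and some integer a with 0 < a < p. Then B_0(p,d) = B'(p,d). -/
lemma lambdaP_mul_pow {p a : ℕ} (m : ℕ) (hp : 1 < p) (ha : 0 < a) (hap : a < p) :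
    lambdaP p (a * p ^ m) = m * (a * p ^ m) := by
  have hdigits : Nat.digits p (a * p ^ m) = List.replicate m 0 ++ [a] := by
    rw [mul_comm, Nat.digits_base_pow_mul hp ha, Nat.digits_of_lt _ _ ha.ne' hap]
  have hzero : ∀ i ∈ Finset.range m,
      i * (List.replicate m 0 ++ [a]).getD i 0 * p ^ i = 0 := by
    intro i hi
    rw [List.getD_append _ _ _ _ (by simpa using hi)]
    simp
  rw [lambdaP, hdigits, List.length_append, List.length_replicate, List.length_singleton,
    Finset.sum_range_succ, Finset.sum_congr rfl hzero,
    List.getD_append_right _ _ _ _ (by simp)]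
  simp [mul_assoc]

lemma Bprime_of_two_mul_eq {p d a m : ℕ} (hp : 1 < p) (ha : 0 < a) (hap : a < p)
    (h2d : 2 * d = a * p ^ m * (p - 1)) :
    Bprime p d = 2 + 2 * p / (p - 1) + 2 * m := by
  set t := a * p ^ m
  have ht0 : 0 < t := Nat.mul_pos ha (Nat.pow_pos (by omega))
  have hd : 0 < d := by nlinarith [Nat.sub_pos_of_lt hp]
  have hquot : 2 * d / (p - 1) = t := by rw [h2d, Nat.mul_div_cancel _ (by omega)]
  have hnum : p * t + (p - 1) * lambdaP p t = p * t + d * (2 * m) := by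
    rw [lambdaP_mul_pow m hp ha hap, show (p - 1) * (m * t) = m * (t * (p - 1)) by ring, ← h2d]
    ring
  -- `p t / d = 2 p t / (t (p - 1))`
  have hpt : p * t / d = 2 * p / (p - 1) := by
    rw [← Nat.mul_div_mul_left (p * t) d two_pos, h2d,
      show 2 * (p * t) = t * (2 * p) by ring, Nat.mul_div_mul_left _ _ ht0]
  rw [Bprime, hquot, hnum, Nat.add_mul_div_left _ _ hd, hpt, add_assoc]

lemma padicValNat_two_mul_eq {p d a m : ℕ} [Fact p.Prime] (ha : 0 < a) (hap : a < p)
    (h2d : 2 * d = a * p ^ m * (p - 1)) :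
    padicValNat p (2 * d) = m := by
  have hp := (Fact.out : p.Prime).one_lt
  have hcoprime : ¬ p ∣ a * (p - 1) := fun h =>
    ((Fact.out : p.Prime).dvd_mul.1 h).elim (fun h => absurd (Nat.le_of_dvd ha h) (by omega))
      (fun h => absurd (Nat.le_of_dvd (by omega) h) (by omega))
  rw [h2d, mul_right_comm, padicValNat.mul (Nat.mul_pos ha (by omega)).ne' (by positivity),
    padicValNat.eq_zero_of_not_dvd hcoprime, padicValNat.prime_pow, zero_add]

lemma padicValNat_two_mul_of_ne_two {p : ℕ} [Fact p.Prime] (hp2 : p ≠ 2) {d : ℕ} (hd : d ≠ 0) :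
    padicValNat p (2 * d) = padicValNat p d := by
  rw [padicValNat.mul two_ne_zero hd, padicValNat_primes hp2, zero_add]

theorem stmt_5_general (p d a m : ℕ) (hp : p.Prime)
    (h2d : 2 * d = a * p ^ m * (p - 1)) (ha0 : 0 < a) (hap : a < p) :
    B0 p d = Bprime p d := by
  have : Fact p.Prime := ⟨hp⟩
  have hd : d ≠ 0 := by
    rintro rfl
    simp [ha0.ne', hp.ne_zero, Nat.sub_eq_zero_iff_le] at h2d
    exact absurd hp.two_le (by omega)
  have hval := padicValNat_two_mul_eq ha0 hap h2d
  rw [Bprime_of_two_mul_eq hp.one_lt ha0 hap h2d, B0]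
  by_cases hp2 : p = 2
  · subst hp2
    rw [padicValNat.mul two_ne_zero hd, padicValNat_self] at hval
    simp only [if_true]
    omega
  have hvald : padicValNat p d = m := by rwa [← padicValNat_two_mul_of_ne_two hp2 hd]
  by_cases hp3 : p = 3
  · subst hp3
    simp [hvald]
  have hp4 : p ≠ 4 := by
    rintro rfl
    exact absurd hp (by decide)
  have hp5 : 5 ≤ p := by have := hp.two_le; omega
  have hquot : 2 * p / (p - 1) = 2 := Nat.div_eq_of_lt_le (by omega) (by omega)
  rw [if_neg hp2, if_neg hp3, if_pos ⟨a * p ^ m, by rw [h2d, mul_comm]⟩, hvald, hquot]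

theorem stmt_5 (p d a m : ℕ) (hp : p.Prime) (hd : 0 < d)
    (h2d : 2 * d = a * p ^ m * (p - 1)) (ha0 : 0 < a) (hap : a < p) :
    B0 p d = Bprime p d :=
  stmt_5_general p d a m hp h2d ha0 hap
end

section
/- B'(2,1) = 8, B'(2,2) = 10, B'(2,3) = 9, and B'(2,d) ≥ 9 for every integer d ≥ 4. -/
lemma lambdaP_two_lower (d : ℕ) (hd : 4 ≤ d) : 3 * d ≤ lambdaP 2 (2 * d) := by
  set m := 2 * d with hm
  have hm8 : 8 ≤ m := by omega
  have hm0 : m ≠ 0 := by omega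
  set l := Nat.digits 2 m with hl
  have hnil : l ≠ [] := Nat.digits_ne_nil_iff_ne_zero.mpr hm0
  have hLpos : 0 < l.length := List.length_pos_iff.mpr hnil
  have hmlt : m < 2 ^ l.length := Nat.lt_base_pow_length_digits (by norm_num)
  have hL4 : 4 ≤ l.length := by
    by_contra h
    push_neg at h
    have : m < 2 ^ 3 := lt_of_lt_of_le hmlt (Nat.pow_le_pow_right (by norm_num) (by omega))
    omega
  set s := l.length - 1 with hs
  have hslt : s < l.length := by omega
  have hlast : l.getD s 0 ≠ 0 := by
    rw [List.getD_eq_getElem l 0 hslt]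
    have := Nat.getLast_digit_ne_zero 2 hm0
    rwa [List.getLast_eq_getElem] at this
  have hterm : 3 * d ≤ s * l.getD s 0 * 2 ^ s := by
    have h1 : 1 ≤ l.getD s 0 := Nat.one_le_iff_ne_zero.mpr hlast
    have hd2 : d < 2 ^ s := by
      have : 2 ^ l.length = 2 * 2 ^ s := by
        rw [hs, ← pow_succ']
        congr 1
        omega
      omega
    have h3s : 3 ≤ s := by omega
    calc 3 * d ≤ 3 * 2 ^ s := by omega
      _ ≤ s * 2 ^ s := Nat.mul_le_mul_right _ h3s
      _ = s * 1 * 2 ^ s := by ring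
      _ ≤ s * l.getD s 0 * 2 ^ s := by
          exact Nat.mul_le_mul_right _ (Nat.mul_le_mul_left _ h1)
  calc 3 * d ≤ s * l.getD s 0 * 2 ^ s := hterm
    _ ≤ lambdaP 2 m := by
        unfold lambdaP
        exact Finset.single_le_sum (f := fun i => i * (Nat.digits 2 m).getD i 0 * 2 ^ i)
          (fun i _ => Nat.zero_le _) (Finset.mem_range.mpr hslt)

theorem stmt_11 :
    Bprime 2 1 = 8 ∧ Bprime 2 2 = 10 ∧ Bprime 2 3 = 9 ∧
      ∀ d : ℕ, 4 ≤ d → 9 ≤ Bprime 2 d := by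
  refine ⟨by norm_num [Bprime, lambdaP, Finset.sum_range_succ],
    by norm_num [Bprime, lambdaP, Finset.sum_range_succ],
    by norm_num [Bprime, lambdaP, Finset.sum_range_succ], ?_⟩
  intro d hd
  have hkey := lambdaP_two_lower d hd
  have hB : Bprime 2 d = 2 + (2 * (2 * d) + lambdaP 2 (2 * d)) / d := by
    simp [Bprime]
  rw [hB]
  have h7 : 7 ≤ (2 * (2 * d) + lambdaP 2 (2 * d)) / d := by
    rw [Nat.le_div_iff_mul_le (by omega : 0 < d)]
    omega
  omega
end

section
/- Let n ≥ 3 be an integer and μ : (ℤ/2^nℤ)ˣ → ℂˣ a group homomorphism. Suppose μ does not factor through (ℤ/2^{n−1}ℤ)ˣ, i.e., there exists a unit u ∈ (ℤ/2^nℤ)ˣ lying in the kernel of the natural reduction map (ℤ/2^nℤ)ˣ → (ℤ/2^{n−1}ℤ)ˣ with μ(u) ≠ 1. Then 2^{n−2} divides the order of μ as an element of the group of characters of (ℤ/2^nℤ)ˣ under pointwise multiplication. -/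
lemma aux5 (m : ℕ) : ∃ t : ℤ, (5:ℤ)^(2^m) = 1 + 2^(m+2) + 2^(m+3) * t := by
  induction m with
  | zero => exact ⟨0, by norm_num⟩
  | succ m ih =>
    obtain ⟨t, ht⟩ := ih
    refine ⟨t + 2^m * (1+2*t)^2, ?_⟩
    have h2 : (5:ℤ)^(2^(m+1)) = ((5:ℤ)^(2^m))^2 := by rw [← pow_mul, pow_succ]
    rw [h2, ht]
    ring

lemma aux5' (m : ℕ) : (5 : ZMod (2^(m+3)))^(2^m) = 1 + 2^(m+2) := by
  obtain ⟨t, ht⟩ := aux5 m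
  have h0 : (2 : ZMod (2^(m+3)))^(m+3) = 0 := by
    have := ZMod.natCast_self (2^(m+3))
    push_cast at this
    exact this
  have := congrArg (Int.cast : ℤ → ZMod (2^(m+3))) ht
  push_cast at this
  rw [h0] at this
  simpa using this

theorem stmt_16 (n : ℕ) (hn : 3 ≤ n) (μ : (ZMod (2 ^ n))ˣ →* ℂˣ)
    (h : ∃ u : (ZMod (2 ^ n))ˣ,
      ZMod.unitsMap (pow_dvd_pow 2 (Nat.sub_le n 1)) u = 1 ∧ μ u ≠ 1) :
    2 ^ (n - 2) ∣ orderOf μ := by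
  obtain ⟨m, rfl⟩ : ∃ m, n = m + 3 := ⟨n - 3, by omega⟩
  obtain ⟨u, hu1, hu2⟩ := h
  set a : ZMod (2^(m+3)) := (u : ZMod (2^(m+3))) with haa
  -- value of a in ZMod 2^(m+2) is 1
  have hcast : ((a.val : ℕ) : ZMod (2^(m+2))) = 1 := by
    have h1 := congrArg (Units.val) hu1
    simp only [ZMod.unitsMap, Units.coe_map, MonoidHom.coe_coe, Units.val_one] at h1
    rw [ZMod.castHom_apply] at h1
    have h2 : ((a.val : ℕ) : ZMod (2^(m+3))) = a := ZMod.natCast_rightInverse a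
    have h3 : (ZMod.cast ((a.val : ℕ) : ZMod (2^(m+3))) : ZMod (2^(m+2))) = ((a.val:ℕ) : ZMod (2^(m+2))) :=
      ZMod.cast_natCast (show (2:ℕ)^(m+2) ∣ 2^(m+3) from pow_dvd_pow 2 (Nat.le_succ _)) _
    rw [← h3, h2]; convert h1 using 2
  have hK4 : (4:ℕ) ≤ 2^(m+2) := by
    calc (4:ℕ) = 2^2 := by norm_num
    _ ≤ 2^(m+2) := Nat.pow_le_pow_right (by norm_num) (by omega)
  have hmod : a.val % 2^(m+2) = 1 := by
    have h4 : a.val ≡ 1 [MOD 2^(m+2)] := by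
      have := (ZMod.natCast_eq_natCast_iff a.val 1 (2^(m+2))).mp (by simpa using hcast)
      exact this
    simpa [Nat.ModEq, Nat.mod_eq_of_lt (show 1 < 2^(m+2) by omega)] using h4
  have hlt : a.val < 2^(m+3) := ZMod.val_lt a
  have h23 : (2:ℕ)^(m+3) = 2 * 2^(m+2) := by ring
  have hdm := Nat.div_add_mod a.val (2^(m+2))
  set q := a.val / 2^(m+2) with hqdef
  have hq2 : q < 2 := by
    rcases Nat.lt_or_ge q 2 with h | h
    · exact h
    · exfalso
      have : 2 * 2^(m+2) ≤ 2^(m+2) * q := by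
        calc 2 * 2^(m+2) = 2^(m+2) * 2 := by ring
        _ ≤ 2^(m+2) * q := Nat.mul_le_mul_left _ h
      omega
  have haval : a.val = 1 ∨ a.val = 2^(m+2) + 1 := by
    interval_cases q <;> omega
  have hself : ((a.val : ℕ) : ZMod (2^(m+3))) = a := ZMod.natCast_rightInverse a
  rcases haval with hv1 | hv1
  · -- a = 1, so u = 1, contradiction
    exfalso
    apply hu2
    have : u = 1 := by
      ext
      rw [← haa, ← hself, hv1]
      simp
    rw [this, map_one]
  · -- a = 1 + 2^(m+2)
    have ha : a = 1 + 2^(m+2) := by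
      rw [← hself, hv1]
      push_cast
      ring
    have h0 : (2 : ZMod (2^(m+3)))^(m+3) = 0 := by
      have := ZMod.natCast_self (2^(m+3))
      push_cast at this
      exact this
    -- 5 as a unit
    have hcop : Nat.Coprime 5 (2^(m+3)) :=
      Nat.Coprime.pow_right _ (by decide)
    set v : (ZMod (2^(m+3)))ˣ := ZMod.unitOfCoprime 5 hcop with hvdef
    have hv5 : (v : ZMod (2^(m+3))) = 5 := by
      rw [hvdef]
      simp [ZMod.coe_unitOfCoprime]
    have hvu : v ^ (2^m) = u := by
      ext
      push_cast
      rw [hv5, aux5' m, ← haa, ha]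
    have ha2 : a^2 = 1 := by
      rw [ha]
      have : ((1:ZMod (2^(m+3))) + 2^(m+2))^2 = 1 + 2^(m+3) + 2^(m+3) * 2^(m+1) := by ring
      rw [this, h0]
      ring
    have hu21 : u^2 = 1 := by
      ext
      push_cast
      rw [← haa, ha2]
    -- order of μ v
    have hμv : (μ v)^(2^m) = μ u := by rw [← map_pow, hvu]
    have hne : (μ v)^(2^m) ≠ 1 := by rw [hμv]; exact hu2
    have hone : (μ v)^(2^(m+1)) = 1 := by
      rw [pow_succ 2 m, pow_mul, hμv, ← map_pow, hu21, map_one]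
    have hdvd : orderOf (μ v) ∣ 2^(m+1) := orderOf_dvd_of_pow_eq_one hone
    have hndvd : ¬ orderOf (μ v) ∣ 2^m := fun hd => hne (orderOf_dvd_iff_pow_eq_one.mp hd)
    obtain ⟨k, hk, hord⟩ := (Nat.dvd_prime_pow Nat.prime_two).mp hdvd
    have hkm : k = m + 1 := by
      by_contra hkm
      exact hndvd (hord ▸ pow_dvd_pow 2 (by omega))
    -- orderOf (μ v) ∣ orderOf μ
    have hfin : (μ v)^(orderOf μ) = 1 := by
      have h5 := pow_orderOf_eq_one μ
      have : (μ ^ orderOf μ) v = (μ v)^(orderOf μ) := rfl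
      rw [← this, h5]
      rfl
    have : orderOf (μ v) ∣ orderOf μ := orderOf_dvd_of_pow_eq_one hfin
    rw [hord, hkm] at this
    simpa using this
end
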